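/- For Hermitian positive definite matrices W and E of size N, tr(W E) − log det(W) ≥ tr(E^{-1} E) − log det(E^{-1}) = N + log det(E), with equality iff W = E^{-1}. -/

import Mathlib

/-!
Write `E = Sᴴ S` with `S` invertible. Then `tr (W E) = tr (S W Sᴴ)` and
`det (S W Sᴴ) = det W · det E`, so the claim is the case `E = 1` applied to the positive definite
matrix `M = S W Sᴴ`, and `S W Sᴴ = 1` exactly when `W = E⁻¹`. In terms of the eigenvalues `λᵢ > 0`
of `M`, `tr M - log det M = ∑ᵢ (λᵢ - log λᵢ)`, and `x - log x ≥ 1` with equality only at `x = 1`.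
-/

open Matrix ComplexOrder

namespace Real

lemma one_le_sub_log {x : ℝ} (hx : 0 < x) : 1 ≤ x - log x := by
  linarith [log_le_sub_one_of_pos hx]

lemma sub_log_eq_one_iff {x : ℝ} (hx : 0 < x) : x - log x = 1 ↔ x = 1 := by
  refine ⟨fun h => ?_, fun h => by simp [h]⟩
  by_contra hx1
  linarith [log_lt_sub_one_of_pos hx hx1]

variable {ι : Type*} [Fintype ι] {x : ι → ℝ}

lemma card_le_sum_sub_log (hx : ∀ i, 0 < x i) :
    (Fintype.card ι : ℝ) ≤ ∑ i, (x i - log (x i)) := by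
  simpa using Finset.sum_le_sum fun i (_ : i ∈ Finset.univ) => one_le_sub_log (hx i)

lemma sum_sub_log_eq_card_iff (hx : ∀ i, 0 < x i) :
    ∑ i, (x i - log (x i)) = Fintype.card ι ↔ x = 1 := by
  have h := Finset.sum_eq_sum_iff_of_le fun i (_ : i ∈ Finset.univ) => one_le_sub_log (hx i)
  simp only [Finset.sum_const, Finset.card_univ, nsmul_eq_mul, mul_one, Finset.mem_univ,
    forall_const] at h
  rw [eq_comm, h, funext_iff]
  exact forall_congr' fun i => eq_comm.trans (sub_log_eq_one_iff (hx i))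

end Real

variable {n : Type*} [Fintype n] [DecidableEq n]

lemma Matrix.IsHermitian.eigenvalues_eq_one_iff {𝕜 : Type*} [RCLike 𝕜] {M : Matrix n n 𝕜}
    (hM : M.IsHermitian) : hM.eigenvalues = 1 ↔ M = 1 := by
  refine ⟨fun h => CFC.eq_one_of_spectrum_subset_one (R := ℝ) M ?_ hM, fun h => ?_⟩
  · rw [hM.spectrum_real_eq_range_eigenvalues, h]
    rintro _ ⟨i, rfl⟩
    rfl
  · ext i
    have : Nonempty n := ⟨i⟩
    have hi := hM.eigenvalues_mem_spectrum_real i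
    subst h
    simpa [spectrum.one_eq] using hi

open scoped MatrixOrder in
lemma Matrix.PosDef.exists_eq_conjTranspose_mul_self {𝕜 : Type*} [RCLike 𝕜] {E : Matrix n n 𝕜}
    (hE : E.PosDef) : ∃ S : Matrix n n 𝕜, IsUnit S ∧ E = Sᴴ * S :=
  CStarAlgebra.isStrictlyPositive_iff_eq_star_mul_self.mp hE.isStrictlyPositive

lemma Matrix.mul_mul_conjTranspose_eq_one_iff_eq_inv {R : Type*} [CommRing R] [StarRing R]
    {S W : Matrix n n R} (hS : IsUnit S) : S * W * Sᴴ = 1 ↔ W = (Sᴴ * S)⁻¹ := by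
  have hdet : IsUnit (Sᴴ * S).det := (isUnit_iff_isUnit_det _).mp (hS.star.mul hS)
  rw [mul_assoc, mul_eq_one_comm, mul_assoc]
  exact ⟨fun h => (inv_eq_left_inv h).symm, fun h => h ▸ nonsing_inv_mul _ hdet⟩

namespace Matrix.PosDef

variable {M : Matrix n n ℂ}

lemma det_re_pos (hM : M.PosDef) : 0 < M.det.re := (Complex.pos_iff.mp hM.det_pos).1

lemma det_im_eq_zero (hM : M.PosDef) : M.det.im = 0 := (Complex.pos_iff.mp hM.det_pos).2.symm

lemma log_det_re_mul {A B : Matrix n n ℂ} (hA : A.PosDef) (hB : B.PosDef) :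
    Real.log (A * B).det.re = Real.log A.det.re + Real.log B.det.re := by
  rw [det_mul, Complex.mul_re, hA.det_im_eq_zero, zero_mul, sub_zero,
    Real.log_mul hA.det_re_pos.ne' hB.det_re_pos.ne']

lemma trace_re_sub_log_det_re (hM : M.PosDef) :
    M.trace.re - Real.log M.det.re =
      ∑ i, (hM.1.eigenvalues i - Real.log (hM.1.eigenvalues i)) := by
  rw [hM.1.trace_eq_sum_eigenvalues, hM.1.det_eq_prod_eigenvalues, Finset.sum_sub_distrib,
    ← Real.log_prod fun i _ => (hM.eigenvalues_pos i).ne']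
  norm_cast

lemma card_le_trace_re_sub_log_det_re (hM : M.PosDef) :
    (Fintype.card n : ℝ) ≤ M.trace.re - Real.log M.det.re :=
  hM.trace_re_sub_log_det_re ▸ Real.card_le_sum_sub_log hM.eigenvalues_pos

lemma trace_re_sub_log_det_re_eq_card_iff (hM : M.PosDef) :
    M.trace.re - Real.log M.det.re = Fintype.card n ↔ M = 1 := by
  rw [hM.trace_re_sub_log_det_re, Real.sum_sub_log_eq_card_iff hM.eigenvalues_pos,
    hM.1.eigenvalues_eq_one_iff]

end Matrix.PosDef

/-- For Hermitian positive definite `W`, `E`: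
`tr(W E) - log det W ≥ N + log det E`, with equality iff `W = E⁻¹`. -/
theorem stmt_13 {N : ℕ} (W E : Matrix (Fin N) (Fin N) ℂ)
    (hW : W.PosDef) (hE : E.PosDef) :
    (N : ℝ) + Real.log E.det.re ≤ (W * E).trace.re - Real.log W.det.re ∧
    ((W * E).trace.re - Real.log W.det.re = (N : ℝ) + Real.log E.det.re
      ↔ W = E⁻¹) := by
  obtain ⟨S, hS, rfl⟩ := hE.exists_eq_conjTranspose_mul_self
  have hM : (S * W * Sᴴ).PosDef :=
    hW.mul_mul_conjTranspose_same (vecMul_injective_iff_isUnit.mpr hS)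
  have htrace : (S * W * Sᴴ).trace = (W * (Sᴴ * S)).trace := by
    rw [trace_mul_cycle, trace_mul_comm]
  have hdet : (S * W * Sᴴ).det = (W * (Sᴴ * S)).det := by
    simp only [det_mul]
    ring
  have hle := hM.card_le_trace_re_sub_log_det_re
  have heq := hM.trace_re_sub_log_det_re_eq_card_iff
  rw [Fintype.card_fin, htrace, hdet, hW.log_det_re_mul hE] at hle heq
  rw [← mul_mul_conjTranspose_eq_one_iff_eq_inv hS, ← heq]
  constructor
  · linarith
  · constructor <;> intro h <;> linarith
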